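/- arXiv:1710.10737 — 3 statements merged into one kernel-verified Lean document; each statement's English description precedes it below -/
import Mathlib

section
/- Let λmin⁺ and λmax be real numbers with 0 < λmin⁺ ≤ λmax ≤ 1, let ω ∈ (0,2), and define a1 = 1 + 3β + 2β² − (ω(2−ω) + ωβ)λmin⁺ and a2 = β + 2β² + ωβ λmax. If 0 ≤ β < (1/8)(−4 + ω λmin⁺ − ω λmax + sqrt((4 − ω λmin⁺ + ω λmax)² + 16 ω(2−ω) λmin⁺)), then a1 + a2 < 1. -/
/-- Let `λmin⁺` and `λmax` be real numbers with `0 < λmin⁺ ≤ λmax ≤ 1`,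
let `ω ∈ (0,2)`, and define
`a1 = 1 + 3β + 2β² − (ω(2−ω) + ωβ)λmin⁺` and `a2 = β + 2β² + ωβ λmax`.
If `0 ≤ β < (1/8)(−4 + ω λmin⁺ − ω λmax + sqrt((4 − ω λmin⁺ + ω λmax)² + 16 ω(2−ω) λmin⁺))`,
then `a1 + a2 < 1`. -/
theorem shb_momentum_range (lmin lmax ω β a1 a2 : ℝ)
    (hlmin_pos : 0 < lmin) (hle : lmin ≤ lmax) (hlmax_le : lmax ≤ 1)
    (hω0 : 0 < ω) (hω2 : ω < 2)
    (ha1 : a1 = 1 + 3 * β + 2 * β ^ 2 - (ω * (2 - ω) + ω * β) * lmin)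
    (ha2 : a2 = β + 2 * β ^ 2 + ω * β * lmax)
    (hβ0 : 0 ≤ β)
    (hβ : β < (1 / 8) * (-4 + ω * lmin - ω * lmax +
      Real.sqrt ((4 - ω * lmin + ω * lmax) ^ 2 + 16 * ω * (2 - ω) * lmin))) :
    a1 + a2 < 1 := by
  set s := Real.sqrt ((4 - ω * lmin + ω * lmax) ^ 2 + 16 * ω * (2 - ω) * lmin) with hs
  have hsnn : 0 ≤ s := Real.sqrt_nonneg _
  have hsq : s ^ 2 = (4 - ω * lmin + ω * lmax) ^ 2 + 16 * ω * (2 - ω) * lmin := by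
    rw [hs, Real.sq_sqrt]
    nlinarith [mul_pos hω0 hlmin_pos, mul_pos (mul_pos hω0 (by linarith : (0:ℝ) < 2 - ω)) hlmin_pos]
  have hb : 0 < 4 - ω * lmin + ω * lmax := by nlinarith
  have key : (8 * β + (4 - ω * lmin + ω * lmax)) ^ 2 < s ^ 2 := by nlinarith
  nlinarith [key, hsq]
end

section
/- Assume β = 0 and 0 < ω < 2, and that λmin⁺ > 0 (exactness). Let x* be the orthogonal projection of x0 onto {x : A x = b}. Then the SGD iterates x_{k+1} = x_k − ω Aᵀ H_k (A x_k − b) satisfy, for all k ≥ 0, E[‖x_k − x*‖²] ≤ (1 − ω(2−ω)λmin⁺)^k ‖x0 − x*‖². -/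
open Matrix MeasureTheory ProbabilityTheory

/-- Matrices over measurable entries carry the product σ-algebra. -/
local instance {m n : ℕ} : MeasurableSpace (Matrix (Fin m) (Fin n) ℝ) :=
  MeasurableSpace.pi

/-!
With `e k = x k - x*`, the identity `H A Aᵀ H = H` turns one SGD step into
`‖e (k+1)‖² = ‖e k‖² - ω (2 - ω) ⟪A e k, H_k A e k⟫`, so `‖e k‖ ≤ ‖x0 - x*‖` almost surely,
which makes all the expectations involved finite.
Since `e k` is a function of `H_0, …, H_{k-1}`, it is independent of `H_k`, and the expectation
of the quadratic form is `E ⟪A e k, W A e k⟫ ≥ λmin⁺ E ‖e k‖²`: the errors stay in the row space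
of `A`, where `x0 - x*` lies because `x*` is the projection of `x0`. This gives
`E ‖e (k+1)‖² ≤ (1 - ω (2 - ω) λmin⁺) E ‖e k‖²`, and iterating proves the bound.
-/

namespace Matrix

variable {m n : ℕ}

theorem dotProduct_mulVec_eq_sum (M : Matrix (Fin n) (Fin n) ℝ) (u : Fin n → ℝ) :
    u ⬝ᵥ (M *ᵥ u) = ∑ i, ∑ j, u i * u j * M i j := by
  rw [← toBilin'_apply', toBilin'_apply]
  exact Finset.sum_congr rfl fun i _ => Finset.sum_congr rfl fun j _ => by ring

theorem dotProduct_transpose_mul_mul_mulVec (A : Matrix (Fin m) (Fin n) ℝ)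
    (W : Matrix (Fin m) (Fin m) ℝ) (v : Fin n → ℝ) :
    v ⬝ᵥ ((Aᵀ * W * A) *ᵥ v) = (A *ᵥ v) ⬝ᵥ (W *ᵥ (A *ᵥ v)) := by
  rw [← mulVec_mulVec, ← mulVec_mulVec, dotProduct_transpose_mulVec, dotProduct_comm]

theorem dotProduct_self_sub_smul_transpose_mulVec (A : Matrix (Fin m) (Fin n) ℝ)
    {H : Matrix (Fin m) (Fin m) ℝ} (hHsymm : H.IsHermitian) (hH : H * (A * Aᵀ) * H = H)
    (v : Fin n → ℝ) (ω : ℝ) :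
    (v - ω • (Aᵀ *ᵥ (H *ᵥ (A *ᵥ v)))) ⬝ᵥ (v - ω • (Aᵀ *ᵥ (H *ᵥ (A *ᵥ v)))) =
      v ⬝ᵥ v - ω * (2 - ω) * ((A *ᵥ v) ⬝ᵥ (H *ᵥ (A *ᵥ v))) := by
  set u := A *ᵥ v
  have hcross : v ⬝ᵥ (Aᵀ *ᵥ (H *ᵥ u)) = u ⬝ᵥ (H *ᵥ u) := by
    rw [dotProduct_transpose_mulVec, dotProduct_comm]
  have hsq : (Aᵀ *ᵥ (H *ᵥ u)) ⬝ᵥ (Aᵀ *ᵥ (H *ᵥ u)) = u ⬝ᵥ (H *ᵥ u) := by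
    have hself := dotProduct_transpose_mulVec H (A *ᵥ (Aᵀ *ᵥ (H *ᵥ u))) u
    rw [(isHermitian_iff_isSymm.1 hHsymm).eq] at hself
    rw [dotProduct_transpose_mulVec, dotProduct_comm, hself, mulVec_mulVec, mulVec_mulVec,
      Matrix.mul_assoc H A, mulVec_mulVec, hH]
  rw [sub_dotProduct, dotProduct_sub, dotProduct_sub, smul_dotProduct, smul_dotProduct,
    dotProduct_smul, dotProduct_smul, dotProduct_comm (Aᵀ *ᵥ _) v, hcross, hsq]
  simp only [smul_eq_mul]
  ring

theorem exists_eq_transpose_mulVec_of_orthogonal_ker (A : Matrix (Fin m) (Fin n) ℝ)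
    {v : Fin n → ℝ} (hv : ∀ z, A *ᵥ z = 0 → v ⬝ᵥ z = 0) : ∃ u, v = Aᵀ *ᵥ u := by
  have hmem : WithLp.toLp 2 v ∈ (toEuclideanLin A).kerᗮ := by
    refine (Submodule.mem_orthogonal' _ _).2 fun z hz => ?_
    rw [EuclideanSpace.inner_eq_star_dotProduct, star_trivial, dotProduct_comm]
    exact hv _ (by simpa using congrArg WithLp.ofLp (LinearMap.mem_ker.1 hz))
  rw [LinearMap.orthogonal_ker, ← toEuclideanLin_conjTranspose_eq_adjoint] at hmem
  obtain ⟨w, hw⟩ := hmem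
  exact ⟨w.ofLp, by
    simpa [conjTranspose_eq_transpose_of_trivial] using (congrArg WithLp.ofLp hw).symm⟩

theorem dotProduct_eq_zero_of_forall_dotProduct_self_le {v z : Fin n → ℝ}
    (h : ∀ t : ℝ, v ⬝ᵥ v ≤ (v - t • z) ⬝ᵥ (v - t • z)) : v ⬝ᵥ z = 0 := by
  have hdiscrim := discrim_le_zero (a := z ⬝ᵥ z) (b := -2 * (v ⬝ᵥ z)) (c := 0) fun t => by
    have ht := h t
    simp only [sub_dotProduct, dotProduct_sub, smul_dotProduct, dotProduct_smul, smul_eq_mul,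
      dotProduct_comm z v] at ht
    linarith
  rw [discrim] at hdiscrim
  nlinarith [sq_nonneg (v ⬝ᵥ z)]

theorem exists_sub_eq_transpose_mulVec_of_nearest_solution (A : Matrix (Fin m) (Fin n) ℝ)
    {b : Fin m → ℝ} {x₀ x : Fin n → ℝ} (hx : A *ᵥ x = b)
    (hnearest : ∀ y, A *ᵥ y = b → (x₀ - x) ⬝ᵥ (x₀ - x) ≤ (x₀ - y) ⬝ᵥ (x₀ - y)) :
    ∃ u, x₀ - x = Aᵀ *ᵥ u :=
  A.exists_eq_transpose_mulVec_of_orthogonal_ker fun z hz =>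
    dotProduct_eq_zero_of_forall_dotProduct_self_le fun t => by
      simpa only [sub_add_eq_sub_sub] using
        hnearest (x + t • z) (by rw [mulVec_add, mulVec_smul, hz, smul_zero, add_zero, hx])

end Matrix

theorem le_pow_mul_of_le_mul {a : ℕ → ℝ} {ρ : ℝ} (ha : ∀ k, 0 ≤ a k)
    (h : ∀ k, a (k + 1) ≤ ρ * a k) (k : ℕ) : a k ≤ ρ ^ k * a 0 := by
  rcases (ha 0).eq_or_lt with h0 | h0
  · have hzero : ∀ k, a k = 0 := by
      intro k
      induction k with
      | zero => exact h0.symm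
      | succ k ih => exact le_antisymm (by simpa [ih] using h k) (ha _)
    simp [hzero]
  · -- `0 ≤ a 1 ≤ ρ * a 0` forces `0 ≤ ρ`
    have hρ : 0 ≤ ρ := nonneg_of_mul_nonneg_left ((ha 1).trans (h 0)) h0
    exact le_geom hρ k fun i _ => h i

theorem Measurable.matrix_mulVec {α : Type*} {mα : MeasurableSpace α} {m n : ℕ}
    {M : α → Matrix (Fin m) (Fin n) ℝ} {v : α → Fin n → ℝ} (hM : Measurable M)
    (hv : Measurable v) : Measurable fun a => M a *ᵥ v a :=
  measurable_pi_lambda _ fun i => by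
    unfold mulVec dotProduct
    exact Finset.measurable_sum _ fun j _ =>
      ((measurable_pi_apply j).comp ((measurable_pi_apply i).comp hM)).mul
        ((measurable_pi_apply j).comp hv)

theorem isCompact_setOf_dotProduct_self_le (n : ℕ) (C : ℝ) :
    IsCompact {v : Fin n → ℝ | v ⬝ᵥ v ≤ C} := by
  refine Metric.isCompact_of_isClosed_isBounded
    (isClosed_le (by unfold dotProduct; fun_prop) continuous_const) ?_
  refine (Metric.isBounded_iff_subset_closedBall 0).2 ⟨√C, fun v hv => ?_⟩
  refine mem_closedBall_zero_iff.2 ((pi_norm_le_iff_of_nonneg (Real.sqrt_nonneg C)).2 fun i => ?_)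
  refine Real.abs_le_sqrt ((?_ : v i ^ 2 ≤ v ⬝ᵥ v).trans hv)
  exact sq (v i) ▸ Finset.single_le_sum (fun j _ => mul_self_nonneg (v j)) (Finset.mem_univ i)

section Iteration

variable {m d : ℕ} {A : Matrix (Fin m) (Fin d) ℝ} {ω : ℝ} {G : ℕ → Matrix (Fin m) (Fin m) ℝ}
  {v : ℕ → Fin d → ℝ}

theorem exists_eq_transpose_mulVec_of_iteration
    (hv : ∀ k, v (k + 1) = v k - ω • (Aᵀ *ᵥ (G k *ᵥ (A *ᵥ v k))))
    (h0 : ∃ u, v 0 = Aᵀ *ᵥ u) (k : ℕ) : ∃ u, v k = Aᵀ *ᵥ u := by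
  induction k with
  | zero => exact h0
  | succ k ih =>
    obtain ⟨u, hu⟩ := ih
    exact ⟨u - ω • (G k *ᵥ (A *ᵥ v k)), by rw [hv, mulVec_sub, mulVec_smul, hu]⟩

theorem dotProduct_self_le_of_iteration
    (hv : ∀ k, v (k + 1) = v k - ω • (Aᵀ *ᵥ (G k *ᵥ (A *ᵥ v k))))
    (hG : ∀ k, (G k).PosSemidef ∧ G k * (A * Aᵀ) * G k = G k) (hω : 0 ≤ ω * (2 - ω))
    (k : ℕ) : v k ⬝ᵥ v k ≤ v 0 ⬝ᵥ v 0 := by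
  refine antitone_nat_of_succ_le (f := fun k => v k ⬝ᵥ v k) (fun k => ?_) (Nat.zero_le k)
  have hquad : 0 ≤ (A *ᵥ v k) ⬝ᵥ (G k *ᵥ (A *ᵥ v k)) := by
    simpa using (hG k).1.dotProduct_mulVec_nonneg (A *ᵥ v k)
  rw [hv, dotProduct_self_sub_smul_transpose_mulVec A (hG k).1.1 (hG k).2]
  nlinarith

end Iteration

section Probability

variable {Ω : Type*} [MeasurableSpace Ω] {μ : Measure Ω}

theorem integrable_comp_of_ae_dotProduct_self_le [IsFiniteMeasure μ] {n : ℕ}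
    {v : Ω → Fin n → ℝ} (hv : AEStronglyMeasurable v μ) {C : ℝ}
    (hC : ∀ᵐ s ∂μ, v s ⬝ᵥ v s ≤ C) {g : (Fin n → ℝ) → ℝ} (hg : Continuous g) :
    Integrable (fun s => g (v s)) μ := by
  obtain ⟨R, hR⟩ :=
    (isCompact_setOf_dotProduct_self_le n C).exists_bound_of_continuousOn hg.continuousOn
  exact .of_bound (hg.comp_aestronglyMeasurable hv) R (hC.mono fun s hs => hR _ hs)

theorem ProbabilityTheory.iIndepFun.indepFun_of_measurable_iSup {ι β γ : Type*}
    {mβ : MeasurableSpace β} [MeasurableSpace γ] {H : ι → Ω → β} (hH : ∀ i, Measurable (H i))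
    (hind : iIndepFun H μ)
    {S : Set ι} {k : ι} (hk : k ∉ S) {X : Ω → γ}
    (hX : Measurable[⨆ i ∈ S, mβ.comap (H i)] X) : IndepFun X (H k) μ := by
  rw [IndepFun_iff_Indep]
  have hST := indep_iSup_of_disjoint (fun i => (hH i).comap_le) hind.iIndep
    (Set.disjoint_singleton_right.2 hk)
  refine indep_of_indep_of_le_right (indep_of_indep_of_le_left hST hX.comap_le) ?_
  exact le_iSup₂ (f := fun i (_ : i ∈ ({k} : Set ι)) => mβ.comap (H i)) k rfl

variable {n : ℕ} {u : Ω → Fin n → ℝ} {M : Ω → Matrix (Fin n) (Fin n) ℝ}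

theorem ProbabilityTheory.IndepFun.mul_apply_indepFun_apply (huM : IndepFun u M μ)
    (i j : Fin n) :
    IndepFun (fun s => u s i * u s j) (fun s => M s i j) μ :=
  huM.comp ((measurable_pi_apply i).mul (measurable_pi_apply j))
    ((measurable_pi_apply j).comp (measurable_pi_apply i))

theorem ProbabilityTheory.IndepFun.integrable_dotProduct_mulVec (huM : IndepFun u M μ)
    (hu : ∀ i j, Integrable (fun s => u s i * u s j) μ)
    (hM : ∀ i j, Integrable (fun s => M s i j) μ) :
    Integrable (fun s => u s ⬝ᵥ (M s *ᵥ u s)) μ := by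
  simp_rw [dotProduct_mulVec_eq_sum]
  exact integrable_finsetSum _ fun i _ => integrable_finsetSum _ fun j _ =>
    (huM.mul_apply_indepFun_apply i j).integrable_mul (hu i j) (hM i j)

theorem ProbabilityTheory.IndepFun.integral_dotProduct_mulVec (huM : IndepFun u M μ)
    (hu : ∀ i j, Integrable (fun s => u s i * u s j) μ)
    (hM : ∀ i j, Integrable (fun s => M s i j) μ) {W : Matrix (Fin n) (Fin n) ℝ}
    (hW : ∀ i j, ∫ s, M s i j ∂μ = W i j) :
    ∫ s, u s ⬝ᵥ (M s *ᵥ u s) ∂μ = ∫ s, u s ⬝ᵥ (W *ᵥ u s) ∂μ := by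
  have hint : ∀ i j, Integrable (fun s => u s i * u s j * M s i j) μ := fun i j =>
    (huM.mul_apply_indepFun_apply i j).integrable_mul (hu i j) (hM i j)
  simp_rw [dotProduct_mulVec_eq_sum]
  rw [integral_finsetSum _ fun i _ => integrable_finsetSum _ fun j _ => hint i j,
    integral_finsetSum _ fun i _ => integrable_finsetSum _ fun j _ => (hu i j).mul_const (W i j)]
  refine Finset.sum_congr rfl fun i _ => ?_
  rw [integral_finsetSum _ fun j _ => hint i j,
    integral_finsetSum _ fun j _ => (hu i j).mul_const (W i j)]
  refine Finset.sum_congr rfl fun j _ => ?_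
  rw [integral_mul_const, ← hW]
  exact (huM.mul_apply_indepFun_apply i j).integral_fun_mul_eq_mul_integral (hu i j).1 (hM i j).1

end Probability

section StochasticIteration

variable {Ω : Type*} {m d : ℕ}
  {A : Matrix (Fin m) (Fin d) ℝ} {ω : ℝ} {H : ℕ → Ω → Matrix (Fin m) (Fin m) ℝ}
  {e : ℕ → Ω → Fin d → ℝ} {v₀ : Fin d → ℝ}

theorem measurable_iSup_comap_of_iteration (he0 : ∀ s, e 0 s = v₀)
    (he : ∀ k s, e (k + 1) s = e k s - ω • (Aᵀ *ᵥ (H k s *ᵥ (A *ᵥ e k s)))) (k : ℕ) :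
    Measurable[⨆ i ∈ Set.Iio k, MeasurableSpace.comap (H i) inferInstance] (e k) := by
  induction k with
  | zero =>
    rw [funext he0]
    exact measurable_const
  | succ k ih =>
    have hpast : Measurable[⨆ i ∈ Set.Iio (k + 1), MeasurableSpace.comap (H i) inferInstance]
        (e k) :=
      ih.mono (biSup_mono fun i (hi : i < k) => Nat.lt_succ_of_lt hi) le_rfl
    have hnow : Measurable[⨆ i ∈ Set.Iio (k + 1), MeasurableSpace.comap (H i) inferInstance]
        (H k) :=
      measurable_iff_comap_le.2 <|
        le_iSup₂ (f := fun i (_ : i ∈ Set.Iio (k + 1)) => MeasurableSpace.comap (H i) inferInstance)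
          k (Nat.lt_succ_self k)
    rw [funext (he k)]
    exact hpast.sub ((measurable_const.matrix_mulVec
      (hnow.matrix_mulVec (measurable_const.matrix_mulVec hpast))).const_smul ω)

variable [MeasurableSpace Ω] {μ : Measure Ω} [IsFiniteMeasure μ] {W : Matrix (Fin m) (Fin m) ℝ}

theorem integrable_comp_of_iteration (hHmeas : ∀ k, Measurable (H k))
    (hHas : ∀ k, ∀ᵐ s ∂μ, (H k s).PosSemidef ∧ H k s * (A * Aᵀ) * H k s = H k s)
    (hω : 0 ≤ ω * (2 - ω)) (he0 : ∀ s, e 0 s = v₀)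
    (he : ∀ k s, e (k + 1) s = e k s - ω • (Aᵀ *ᵥ (H k s *ᵥ (A *ᵥ e k s)))) (k : ℕ)
    {g : (Fin d → ℝ) → ℝ} (hg : Continuous g) : Integrable (fun s => g (e k s)) μ := by
  have hbound : ∀ᵐ s ∂μ, e k s ⬝ᵥ e k s ≤ v₀ ⬝ᵥ v₀ :=
    (ae_all_iff.2 hHas).mono fun s hs => he0 s ▸
      dotProduct_self_le_of_iteration (v := (e · s)) (he · s) hs hω k
  exact integrable_comp_of_ae_dotProduct_self_le
    ((measurable_iSup_comap_of_iteration he0 he k).mono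
      (iSup₂_le fun i _ => (hHmeas i).comap_le) le_rfl).aestronglyMeasurable hbound hg

theorem integral_dotProduct_self_succ_eq (hHmeas : ∀ k, Measurable (H k))
    (hHiid : iIndepFun H μ)
    (hHas : ∀ k, ∀ᵐ s ∂μ, (H k s).PosSemidef ∧ H k s * (A * Aᵀ) * H k s = H k s)
    (hHint : ∀ k i j, Integrable (fun s => H k s i j) μ) (hHW : ∀ k i j, ∫ s, H k s i j ∂μ = W i j)
    (hω : 0 ≤ ω * (2 - ω)) (he0 : ∀ s, e 0 s = v₀)
    (he : ∀ k s, e (k + 1) s = e k s - ω • (Aᵀ *ᵥ (H k s *ᵥ (A *ᵥ e k s)))) (k : ℕ) :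
    ∫ s, e (k + 1) s ⬝ᵥ e (k + 1) s ∂μ =
      ∫ s, e k s ⬝ᵥ e k s ∂μ - ω * (2 - ω) * ∫ s, (A *ᵥ e k s) ⬝ᵥ (W *ᵥ (A *ᵥ e k s)) ∂μ := by
  have hpast := measurable_iSup_comap_of_iteration he0 he k
  have hind : IndepFun (fun s => A *ᵥ e k s) (H k) μ :=
    (hHiid.indepFun_of_measurable_iSup hHmeas (S := Set.Iio k) (lt_irrefl k) hpast).comp
      (measurable_const.matrix_mulVec measurable_id) measurable_id
  have hint {g : (Fin d → ℝ) → ℝ} (hg : Continuous g) : Integrable (fun s => g (e k s)) μ :=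
    integrable_comp_of_iteration hHmeas hHas hω he0 he k hg
  have hu : ∀ i j, Integrable (fun s => (A *ᵥ e k s) i * (A *ᵥ e k s) j) μ := fun i j =>
    hint (g := fun v => (A *ᵥ v) i * (A *ᵥ v) j) (by simp only [mulVec, dotProduct]; fun_prop)
  have hstep : ∀ᵐ s ∂μ, e (k + 1) s ⬝ᵥ e (k + 1) s =
      e k s ⬝ᵥ e k s - ω * (2 - ω) * ((A *ᵥ e k s) ⬝ᵥ (H k s *ᵥ (A *ᵥ e k s))) :=
    (hHas k).mono fun s hs => by
      rw [he, dotProduct_self_sub_smul_transpose_mulVec A hs.1.1 hs.2]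
  rw [integral_congr_ae hstep,
    integral_sub (hint (g := fun v => v ⬝ᵥ v) (by unfold dotProduct; fun_prop))
      ((hind.integrable_dotProduct_mulVec hu (hHint k)).const_mul _),
    integral_const_mul, hind.integral_dotProduct_mulVec hu (hHint k) (hHW k)]

theorem integral_dotProduct_self_succ_le (hHmeas : ∀ k, Measurable (H k))
    (hHiid : iIndepFun H μ)
    (hHas : ∀ k, ∀ᵐ s ∂μ, (H k s).PosSemidef ∧ H k s * (A * Aᵀ) * H k s = H k s)
    (hHint : ∀ k i j, Integrable (fun s => H k s i j) μ) (hHW : ∀ k i j, ∫ s, H k s i j ∂μ = W i j)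
    {lmin : ℝ} (hlmin : ∀ v : Fin d → ℝ, (∃ u, v = Aᵀ *ᵥ u) →
      lmin * (v ⬝ᵥ v) ≤ v ⬝ᵥ ((Aᵀ * W * A) *ᵥ v))
    (hω : 0 ≤ ω * (2 - ω)) (he0 : ∀ s, e 0 s = v₀) (hv₀ : ∃ u, v₀ = Aᵀ *ᵥ u)
    (he : ∀ k s, e (k + 1) s = e k s - ω • (Aᵀ *ᵥ (H k s *ᵥ (A *ᵥ e k s)))) (k : ℕ) :
    ∫ s, e (k + 1) s ⬝ᵥ e (k + 1) s ∂μ ≤ (1 - ω * (2 - ω) * lmin) * ∫ s, e k s ⬝ᵥ e k s ∂μ := by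
  have hlower :
      lmin * ∫ s, e k s ⬝ᵥ e k s ∂μ ≤ ∫ s, (A *ᵥ e k s) ⬝ᵥ (W *ᵥ (A *ᵥ e k s)) ∂μ := by
    rw [← integral_const_mul]
    refine integral_mono
      ((integrable_comp_of_iteration hHmeas hHas hω he0 he k (g := fun v => v ⬝ᵥ v)
        (by unfold dotProduct; fun_prop)).const_mul lmin)
      (integrable_comp_of_iteration hHmeas hHas hω he0 he k
        (g := fun v => (A *ᵥ v) ⬝ᵥ (W *ᵥ (A *ᵥ v))) (by simp only [mulVec, dotProduct]; fun_prop))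
      fun s => ?_
    rw [← dotProduct_transpose_mul_mul_mulVec]
    exact hlmin _
      (exists_eq_transpose_mulVec_of_iteration (v := (e · s)) (he · s) (he0 s ▸ hv₀) k)
  rw [integral_dotProduct_self_succ_eq hHmeas hHiid hHas hHint hHW hω he0 he k]
  nlinarith [mul_le_mul_of_nonneg_left hlower hω]

end StochasticIteration

theorem sgd_L2_linear_convergence_general {m d : ℕ}
    {Ω : Type*} [MeasurableSpace Ω] (μ : Measure Ω) [IsProbabilityMeasure μ]
    (A : Matrix (Fin m) (Fin d) ℝ) (b : Fin m → ℝ)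
    -- the i.i.d. random matrices `H_k`, a.s. symmetric psd with `H A Aᵀ H = H`
    (H : ℕ → Ω → Matrix (Fin m) (Fin m) ℝ)
    (hHmeas : ∀ k, Measurable (H k))
    (hHiid : iIndepFun H μ)
    (hHident : ∀ k, μ.map (H k) = μ.map (H 0))
    (hHas : ∀ k, ∀ᵐ s ∂μ, (H k s).PosSemidef ∧ H k s * (A * Aᵀ) * H k s = H k s)
    (hHint : ∀ k i j, Integrable (fun s => H k s i j) μ)
    -- `W = E[H_0]`
    (W : Matrix (Fin m) (Fin m) ℝ)
    (hW : ∀ i j, W i j = ∫ s, H 0 s i j ∂μ)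
    -- `λmin⁺`: smallest nonzero eigenvalue of `Aᵀ W A`
    (lmin : ℝ)
    (hlmin : ∀ v : Fin d → ℝ, (∃ u, v = Aᵀ *ᵥ u) →
      lmin * (v ⬝ᵥ v) ≤ v ⬝ᵥ ((Aᵀ * W * A) *ᵥ v))
    -- stepsize
    (ω : ℝ) (hω0 : 0 < ω) (hω2 : ω < 2)
    -- the SGD iterates, started from deterministic `x0`
    (x0 : Fin d → ℝ)
    (x : ℕ → Ω → (Fin d → ℝ))
    (hx0 : ∀ s, x 0 s = x0)
    (hrec : ∀ k : ℕ, ∀ s,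
      x (k + 1) s = x k s - ω • (Aᵀ *ᵥ (H k s *ᵥ (A *ᵥ x k s - b))))
    -- `x*` is the orthogonal projection of `x0` onto `{x : A x = b}`
    (xstar : Fin d → ℝ) (hxstar : A *ᵥ xstar = b)
    (hproj : ∀ y : Fin d → ℝ, A *ᵥ y = b →
      (x0 - xstar) ⬝ᵥ (x0 - xstar) ≤ (x0 - y) ⬝ᵥ (x0 - y)) :
    ∀ k : ℕ, ∫ s, (x k s - xstar) ⬝ᵥ (x k s - xstar) ∂μ
      ≤ (1 - ω * (2 - ω) * lmin) ^ k * ((x0 - xstar) ⬝ᵥ (x0 - xstar)) := by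
  have he : ∀ k s, x (k + 1) s - xstar =
      x k s - xstar - ω • (Aᵀ *ᵥ (H k s *ᵥ (A *ᵥ (x k s - xstar)))) := fun k s => by
    rw [hrec, mulVec_sub A, hxstar, sub_right_comm]
  have hHW : ∀ k i j, ∫ s, H k s i j ∂μ = W i j := fun k i j => by
    rw [hW]
    exact (IdentDistrib.comp ⟨(hHmeas k).aemeasurable, (hHmeas 0).aemeasurable, hHident k⟩
      ((measurable_pi_apply j).comp (measurable_pi_apply i))).integral_eq
  have hstep := integral_dotProduct_self_succ_le (μ := μ) (e := fun k s => x k s - xstar)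
    hHmeas hHiid hHas hHint hHW hlmin (by nlinarith) (fun s => by rw [hx0])
    (A.exists_sub_eq_transpose_mulVec_of_nearest_solution hxstar hproj) he
  intro k
  simpa [hx0] using le_pow_mul_of_le_mul
    (fun k => integral_nonneg fun s => dotProduct_self_star_nonneg (x k s - xstar)) hstep k

/-- L2 linear convergence of SGD with constant stepsize (the `β = 0` case
of the stochastic heavy ball method).  Assume `0 < ω < 2` and `λmin⁺ > 0` (exactness).
Let `x*` be the orthogonal projection of `x0` onto `{x : A x = b}`.  Then the SGD
iterates `x (k+1) = x k − ω Aᵀ H_k (A x_k − b)` satisfy, for all `k ≥ 0`,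
`E[‖x_k − x*‖²] ≤ (1 − ω(2−ω)λmin⁺)^k ‖x0 − x*‖²`. -/
theorem sgd_L2_linear_convergence {m d : ℕ}
    {Ω : Type*} [MeasurableSpace Ω] (μ : Measure Ω) [IsProbabilityMeasure μ]
    (A : Matrix (Fin m) (Fin d) ℝ) (b : Fin m → ℝ)
    -- the i.i.d. random matrices `H_k`, a.s. symmetric psd with `H A Aᵀ H = H`
    (H : ℕ → Ω → Matrix (Fin m) (Fin m) ℝ)
    (hHmeas : ∀ k, Measurable (H k))
    (hHiid : iIndepFun H μ)
    (hHident : ∀ k, μ.map (H k) = μ.map (H 0))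
    (hHas : ∀ k, ∀ᵐ s ∂μ, (H k s).PosSemidef ∧ H k s * (A * Aᵀ) * H k s = H k s)
    (hHint : ∀ k i j, Integrable (fun s => H k s i j) μ)
    -- `W = E[H_0]`
    (W : Matrix (Fin m) (Fin m) ℝ)
    (hW : ∀ i j, W i j = ∫ s, H 0 s i j ∂μ)
    -- the objective `f` and exactness
    (f : (Fin d → ℝ) → ℝ)
    (hf : ∀ y, f y = (1 / 2) * ((A *ᵥ y - b) ⬝ᵥ (W *ᵥ (A *ᵥ y - b))))
    (hexact : {y : Fin d → ℝ | f y = 0} = {y : Fin d → ℝ | A *ᵥ y = b})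
    -- `λmin⁺`: smallest nonzero eigenvalue of `Aᵀ W A`
    (lmin : ℝ) (hlmin_pos : 0 < lmin)
    (hlmin : ∀ v : Fin d → ℝ, (∃ u, v = Aᵀ *ᵥ u) →
      lmin * (v ⬝ᵥ v) ≤ v ⬝ᵥ ((Aᵀ * W * A) *ᵥ v))
    -- stepsize
    (ω : ℝ) (hω0 : 0 < ω) (hω2 : ω < 2)
    -- the SGD iterates, started from deterministic `x0`
    (x0 : Fin d → ℝ)
    (x : ℕ → Ω → (Fin d → ℝ))
    (hx0 : ∀ s, x 0 s = x0)
    (hrec : ∀ k : ℕ, ∀ s,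
      x (k + 1) s = x k s - ω • (Aᵀ *ᵥ (H k s *ᵥ (A *ᵥ x k s - b))))
    -- `x*` is the orthogonal projection of `x0` onto `{x : A x = b}`
    (xstar : Fin d → ℝ) (hxstar : A *ᵥ xstar = b)
    (hproj : ∀ y : Fin d → ℝ, A *ᵥ y = b →
      (x0 - xstar) ⬝ᵥ (x0 - xstar) ≤ (x0 - y) ⬝ᵥ (x0 - y)) :
    ∀ k : ℕ, ∫ s, (x k s - xstar) ⬝ᵥ (x k s - xstar) ∂μ
      ≤ (1 - ω * (2 - ω) * lmin) ^ k * ((x0 - xstar) ⬝ᵥ (x0 - xstar)) :=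
  sgd_L2_linear_convergence_general μ A b H hHmeas hHiid hHident hHas hHint W hW lmin hlmin ω hω0
    hω2 x0 x hx0 hrec xstar hxstar hproj
end

section
/- Let M be a symmetric positive semidefinite d×d real matrix, let λmax be its largest eigenvalue and λmin⁺ its smallest nonzero eigenvalue, and let x* ∈ ℝ^d. Let (z_k)_{k≥0} be generated by the deterministic heavy ball recursion z_{k+1} = z_k − ω M (z_k − x*) + β(z_k − z_{k−1}), started from z0, z1 with z0 − x* and z1 − x* in Range(M). If 0 < ω ≤ 1/λmax and (1 − sqrt(ω λmin⁺))² < β < 1, then there exists a constant C > 0 such that for all k ≥ 0, ‖z_k − x*‖² ≤ β^k C. -/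
/-!
In an orthonormal eigenbasis of `M`, the coordinate `c` of `z k - x*` along an eigenvalue `μ`
satisfies `c (k + 2) = p * c (k + 1) - β * c k` with `p = 1 + β - ω μ`. Coordinates along
`μ = 0` vanish, since `z 0 - x*` and `z 1 - x*` lie in the range of `M`. For `μ ≠ 0` we have
`ω λmin⁺ ≤ ω μ ≤ 1`, and the condition on `β` becomes `p² < 4β`: the quadratic form
`Q(x, y) = x² - p x y + β y²` is then positive definite, and `Q(c (k + 1), c k) = β ^ k Q(c 1, c 0)`
forces `c k ^ 2 ≤ β ^ k Q(c 1, c 0) / (β - p² / 4)`. Parseval sums these bounds.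
-/

open Matrix

namespace TwoTermRecurrence

variable {p β : ℝ} {a : ℕ → ℝ}

theorem eq_zero (hrec : ∀ k, a (k + 2) = p * a (k + 1) - β * a k) (h0 : a 0 = 0) (h1 : a 1 = 0)
    (k : ℕ) : a k = 0 := by
  induction k using Nat.strong_induction_on with
  | _ k ih =>
    match k with
    | 0 => exact h0
    | 1 => exact h1
    | k + 2 => rw [hrec, ih k (by omega), ih (k + 1) (by omega)]; ring

theorem energy_eq (hrec : ∀ k, a (k + 2) = p * a (k + 1) - β * a k) (k : ℕ) :
    a (k + 1) ^ 2 - p * a (k + 1) * a k + β * a k ^ 2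
      = β ^ k * (a 1 ^ 2 - p * a 1 * a 0 + β * a 0 ^ 2) := by
  induction k with
  | zero => ring
  | succ k ih => rw [hrec, pow_succ]; linear_combination β * ih

theorem exists_sq_le_pow_mul (hrec : ∀ k, a (k + 2) = p * a (k + 1) - β * a k)
    (hp : p ^ 2 < 4 * β) : ∃ C, ∀ k, a k ^ 2 ≤ β ^ k * C := by
  have hgap : 0 < β - p ^ 2 / 4 := by linarith
  refine ⟨(a 1 ^ 2 - p * a 1 * a 0 + β * a 0 ^ 2) / (β - p ^ 2 / 4), fun k => ?_⟩
  have hcoercive :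
      (β - p ^ 2 / 4) * a k ^ 2 ≤ a (k + 1) ^ 2 - p * a (k + 1) * a k + β * a k ^ 2 := by
    nlinarith [sq_nonneg (a (k + 1) - p / 2 * a k)]
  rw [← mul_div_assoc, le_div_iff₀ hgap, mul_comm]
  exact energy_eq hrec k ▸ hcoercive

end TwoTermRecurrence

theorem sq_one_add_sub_lt_four_mul {t a β : ℝ} (hta : t ≤ a) (ha0 : 0 ≤ a) (ha1 : a ≤ 1)
    (hβ : (1 - √t) ^ 2 < β) (hβ1 : β < 1) : (1 + β - a) ^ 2 < 4 * β := by
  set s := √a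
  set r := √β
  have hβ0 : 0 < β := (sq_nonneg _).trans_lt hβ
  have hs : s ^ 2 = a := Real.sq_sqrt ha0
  have hr : r ^ 2 = β := Real.sq_sqrt hβ0.le
  have hs0 : 0 ≤ s := Real.sqrt_nonneg a
  have hs1 : s ≤ 1 := Real.sqrt_le_one.mpr ha1
  have hr0 : 0 ≤ r := Real.sqrt_nonneg β
  have hr1 : r < 1 := (Real.sqrt_lt' one_pos).mpr (by rwa [one_pow])
  have hrs : 1 - s < r := by
    have hts : √t ≤ s := Real.sqrt_le_sqrt hta
    have : (1 - s) ^ 2 < r ^ 2 := by nlinarith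
    nlinarith
  -- `4β - (1 + β - a)²` factors as `(s + r - 1)(s + 1 - r)(1 + r - s)(1 + r + s)`.
  have h1 : 0 < (s + r - 1) * (s + 1 - r) := mul_pos (by linarith) (by linarith)
  have h2 : 0 < (1 + r - s) * (1 + r + s) := mul_pos (by linarith) (by linarith)
  have := mul_pos h1 h2
  rw [← hs, ← hr]
  nlinarith

section Eigenbasis

variable {n : Type*} [Fintype n]

theorem Matrix.IsHermitian.eigenvectorBasis_dotProduct_mulVec [DecidableEq n]
    {A : Matrix n n ℝ} (hA : A.IsHermitian) (i : n) (w : n → ℝ) :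
    ⇑(hA.eigenvectorBasis i) ⬝ᵥ (A *ᵥ w) =
      hA.eigenvalues i * (⇑(hA.eigenvectorBasis i) ⬝ᵥ w) := by
  have hsymm : Aᵀ = A := (conjTranspose_eq_transpose_of_trivial A).symm.trans hA.eq
  rw [dotProduct_mulVec, ← mulVec_transpose, hsymm, hA.mulVec_eigenvectorBasis, smul_dotProduct,
    smul_eq_mul]

theorem Matrix.IsHermitian.eigenvectorBasis_dotProduct_heavyBall [DecidableEq n]
    {A : Matrix n n ℝ} (hA : A.IsHermitian) {ω β : ℝ} {e : ℕ → n → ℝ}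
    (hrec : ∀ k, e (k + 2) = e (k + 1) - ω • (A *ᵥ e (k + 1)) + β • (e (k + 1) - e k))
    (i : n) (k : ℕ) :
    ⇑(hA.eigenvectorBasis i) ⬝ᵥ e (k + 2) = (1 + β - ω * hA.eigenvalues i) *
      (⇑(hA.eigenvectorBasis i) ⬝ᵥ e (k + 1)) - β * (⇑(hA.eigenvectorBasis i) ⬝ᵥ e k) := by
  rw [hrec, dotProduct_add, dotProduct_sub, dotProduct_smul, dotProduct_smul, dotProduct_sub,
    hA.eigenvectorBasis_dotProduct_mulVec, smul_eq_mul, smul_eq_mul]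
  ring

variable {ι : Type*} [Fintype ι]

theorem OrthonormalBasis.sum_sq_dotProduct (b : OrthonormalBasis ι ℝ (EuclideanSpace ℝ n))
    (v : n → ℝ) : ∑ i, (⇑(b i) ⬝ᵥ v) ^ 2 = v ⬝ᵥ v := by
  have := b.sum_sq_inner_right (WithLp.toLp 2 v)
  rw [← real_inner_self_eq_norm_sq, EuclideanSpace.inner_toLp_toLp] at this
  simpa [EuclideanSpace.inner_eq_star_dotProduct, dotProduct_comm] using this

theorem OrthonormalBasis.exists_dotProduct_self_le_pow_mul
    (b : OrthonormalBasis ι ℝ (EuclideanSpace ℝ n)) {β : ℝ} (hβ : 0 ≤ β) {v : ℕ → n → ℝ}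
    (h : ∀ i, ∃ C, ∀ k, (⇑(b i) ⬝ᵥ v k) ^ 2 ≤ β ^ k * C) :
    ∃ C, 0 < C ∧ ∀ k, v k ⬝ᵥ v k ≤ β ^ k * C := by
  choose C hC using h
  have hsum : 0 ≤ ∑ i, C i :=
    Finset.sum_nonneg fun i _ => by simpa using (sq_nonneg _).trans (hC i 0)
  refine ⟨∑ i, C i + 1, by linarith, fun k => ?_⟩
  calc v k ⬝ᵥ v k = ∑ i, (⇑(b i) ⬝ᵥ v k) ^ 2 := (b.sum_sq_dotProduct (v k)).symm
    _ ≤ ∑ i, β ^ k * C i := Finset.sum_le_sum fun i _ => hC i k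
    _ = β ^ k * ∑ i, C i := (Finset.mul_sum _ _ _).symm
    _ ≤ β ^ k * (∑ i, C i + 1) := by gcongr; linarith

end Eigenbasis

theorem deterministic_heavy_ball_accelerated_general {d : ℕ}
    (M : Matrix (Fin d) (Fin d) ℝ) (hM : M.PosSemidef)
    (lmax lmin : ℝ)
    -- `lmax` is the largest eigenvalue of `M`:
    (hlmax_max : ∀ lam : ℝ, (∃ v : Fin d → ℝ, v ≠ 0 ∧ M *ᵥ v = lam • v) → lam ≤ lmax)
    -- `lmin` is the smallest nonzero eigenvalue of `M`:
    (hlmin_min : ∀ lam : ℝ, (∃ v : Fin d → ℝ, v ≠ 0 ∧ M *ᵥ v = lam • v) →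
      lam = 0 ∨ lmin ≤ lam)
    (xstar : Fin d → ℝ)
    (ω β : ℝ) (hω0 : 0 < ω) (hω : ω ≤ 1 / lmax)
    (hβlow : (1 - Real.sqrt (ω * lmin)) ^ 2 < β) (hβhigh : β < 1)
    (z : ℕ → (Fin d → ℝ))
    (hz0 : ∃ u, z 0 - xstar = M *ᵥ u)
    (hz1 : ∃ u, z 1 - xstar = M *ᵥ u)
    (hrec : ∀ k, 1 ≤ k →
      z (k + 1) = z k - ω • (M *ᵥ (z k - xstar)) + β • (z k - z (k - 1))) :
    ∃ C : ℝ, 0 < C ∧ ∀ k : ℕ,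
      (z k - xstar) ⬝ᵥ (z k - xstar) ≤ β ^ k * C := by
  have hA : M.IsHermitian := hM.1
  set b := hA.eigenvectorBasis
  set e : ℕ → Fin d → ℝ := fun k => z k - xstar
  have herec : ∀ k, e (k + 2) = e (k + 1) - ω • (M *ᵥ e (k + 1)) + β • (e (k + 1) - e k) :=
    fun k => by simp only [e]; rw [hrec (k + 1) (by omega), Nat.add_sub_cancel]; module
  have hωlmax : ω * lmax ≤ 1 := by
    rwa [le_div_iff₀ (one_div_pos.mp (hω0.trans_le hω))] at hω
  refine b.exists_dotProduct_self_le_pow_mul ((sq_nonneg _).trans hβlow.le) fun i => ?_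
  have hcoord := hA.eigenvectorBasis_dotProduct_heavyBall herec i
  have heig : ∃ v : Fin d → ℝ, v ≠ 0 ∧ M *ᵥ v = hA.eigenvalues i • v :=
    ⟨_, fun h => b.orthonormal.ne_zero i (WithLp.ofLp_injective 2 h), hA.mulVec_eigenvectorBasis i⟩
  rcases hlmin_min _ heig with hzero | hlmin
  · have hinit : ∀ j, (∃ u, e j = M *ᵥ u) → ⇑(b i) ⬝ᵥ e j = 0 := by
      rintro j ⟨u, hu⟩
      rw [hu, hA.eigenvectorBasis_dotProduct_mulVec, hzero, zero_mul]
    refine ⟨0, fun k => ?_⟩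
    rw [TwoTermRecurrence.eq_zero (a := fun k => ⇑(b i) ⬝ᵥ e k) hcoord (hinit 0 hz0) (hinit 1 hz1)]
    simp
  · refine TwoTermRecurrence.exists_sq_le_pow_mul hcoord
      (sq_one_add_sub_lt_four_mul ?_ ?_ ?_ hβlow hβhigh)
    · exact mul_le_mul_of_nonneg_left hlmin hω0.le
    · exact mul_nonneg hω0.le (hM.eigenvalues_nonneg i)
    · exact (mul_le_mul_of_nonneg_left (hlmax_max _ heig) hω0.le).trans hωlmax

/-- Let `M` be a symmetric positive semidefinite `d×d` real matrix, let
`λmax` be its largest eigenvalue and `λmin⁺` its smallest nonzero eigenvalue, and let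
`x* ∈ ℝ^d`.  Let `(z_k)` be generated by the deterministic heavy ball recursion
`z (k+1) = z k − ω M (z k − x*) + β (z k − z (k-1))`, started from `z 0, z 1` with
`z 0 − x*` and `z 1 − x*` in `Range M`.  If `0 < ω ≤ 1/λmax` and
`(1 − sqrt(ω λmin⁺))² < β < 1`, then there exists a constant `C > 0` such that for all
`k ≥ 0`, `‖z k − x*‖² ≤ β ^ k * C`. -/
theorem deterministic_heavy_ball_accelerated {d : ℕ}
    (M : Matrix (Fin d) (Fin d) ℝ) (hM : M.PosSemidef)
    (lmax lmin : ℝ)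
    -- `lmax` is the largest eigenvalue of `M`:
    (hlmax_eig : ∃ v : Fin d → ℝ, v ≠ 0 ∧ M *ᵥ v = lmax • v)
    (hlmax_max : ∀ lam : ℝ, (∃ v : Fin d → ℝ, v ≠ 0 ∧ M *ᵥ v = lam • v) → lam ≤ lmax)
    -- `lmin` is the smallest nonzero eigenvalue of `M`:
    (hlmin_pos : 0 < lmin)
    (hlmin_eig : ∃ v : Fin d → ℝ, v ≠ 0 ∧ M *ᵥ v = lmin • v)
    (hlmin_min : ∀ lam : ℝ, (∃ v : Fin d → ℝ, v ≠ 0 ∧ M *ᵥ v = lam • v) →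
      lam = 0 ∨ lmin ≤ lam)
    (xstar : Fin d → ℝ)
    (ω β : ℝ) (hω0 : 0 < ω) (hω : ω ≤ 1 / lmax)
    (hβlow : (1 - Real.sqrt (ω * lmin)) ^ 2 < β) (hβhigh : β < 1)
    (z : ℕ → (Fin d → ℝ))
    (hz0 : ∃ u, z 0 - xstar = M *ᵥ u)
    (hz1 : ∃ u, z 1 - xstar = M *ᵥ u)
    (hrec : ∀ k, 1 ≤ k →
      z (k + 1) = z k - ω • (M *ᵥ (z k - xstar)) + β • (z k - z (k - 1))) :
    ∃ C : ℝ, 0 < C ∧ ∀ k : ℕ,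
      (z k - xstar) ⬝ᵥ (z k - xstar) ≤ β ^ k * C :=
  deterministic_heavy_ball_accelerated_general M hM lmax lmin hlmax_max hlmin_min xstar ω β hω0 hω
    hβlow hβhigh z hz0 hz1 hrec
end
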